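/- For a standard Gaussian vector Z in ℝ^d with R = ‖Z‖, the variance of R converges to 1/2 as d → ∞: lim_{d→∞} (d − 2(Γ((d+1)/2)/Γ(d/2))²) = 1/2. -/

import Mathlib

open Real Filter

noncomputable def myc (m : ℕ) : ℝ := ((2*m).factorial : ℝ) / (4^m * (m.factorial : ℝ) ^ 2)

lemma myc_pos (m : ℕ) : 0 < myc m := by
  unfold myc
  have h1 : (0:ℝ) < ((2*m).factorial : ℝ) := by exact_mod_cast (2*m).factorial_pos
  have h2 : (0:ℝ) < (m.factorial : ℝ) := by exact_mod_cast m.factorial_pos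
  positivity

lemma myc_succ (m : ℕ) : myc (m+1) = myc m * ((2*(m:ℝ)+1)/(2*(m:ℝ)+2)) := by
  unfold myc
  have h1 : (2*(m+1)).factorial = (2*m+2) * ((2*m+1) * (2*m).factorial) := by
    have e : 2*(m+1) = (2*m+1) + 1 := by ring
    rw [e, Nat.factorial_succ, Nat.factorial_succ]
  rw [h1, Nat.factorial_succ]
  have h2 : (0:ℝ) < (m.factorial : ℝ) := by exact_mod_cast m.factorial_pos
  push_cast
  field_simp
  ring

lemma wallis_c : Tendsto (fun m : ℕ => (2*(m:ℝ)+1) * myc m ^ 2) atTop (nhds (2/π)) := by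
  have h := Real.Wallis.tendsto_W_nhds_pi_div_two
  have key : ∀ m : ℕ, (2*(m:ℝ)+1) * myc m ^ 2 = (Real.Wallis.W m)⁻¹ := by
    intro m
    rw [Real.Wallis.W_eq_factorial_ratio]
    unfold myc
    have h1 : (0:ℝ) < ((2*m).factorial : ℝ) := by exact_mod_cast (2*m).factorial_pos
    have h2 : (0:ℝ) < (m.factorial : ℝ) := by exact_mod_cast m.factorial_pos
    have h3 : (2:ℝ)^(4*m) = ((4:ℝ)^m)^2 := by
      rw [← pow_mul, show (4:ℝ) = 2^2 by norm_num, ← pow_mul]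
      ring_nf
    rw [h3]
    have h4 : (0:ℝ) < 2*(m:ℝ)+1 := by positivity
    field_simp
  simp_rw [key]
  have h2 : Tendsto (fun m : ℕ => (Real.Wallis.W m)⁻¹) atTop (nhds (π/2)⁻¹) :=
    h.inv₀ (by positivity)
  have : (π/2)⁻¹ = 2/π := by rw [inv_div]
  rwa [this] at h2



lemma P_mono (m : ℕ) : ((m:ℝ)+1/4) * myc m ^ 2 ≤ ((m:ℝ)+1+1/4) * myc (m+1) ^ 2 := by
  rw [myc_succ, mul_pow, div_pow, ← mul_div_assoc, ← mul_div_assoc]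
  have hc := myc_pos m
  have hm : (0:ℝ) ≤ (m:ℝ) := Nat.cast_nonneg m
  have h2 : (0:ℝ) < (2*(m:ℝ)+2)^2 := by positivity
  rw [le_div_iff₀ h2]
  nlinarith [sq_nonneg (myc m), mul_pos hc hc]

lemma Q_anti (m : ℕ) (hm : 1 ≤ m) :
    ((m:ℝ)+1+1/4+1/(16*((m:ℝ)+1))) * myc (m+1) ^ 2 ≤ ((m:ℝ)+1/4+1/(16*(m:ℝ))) * myc m ^ 2 := by
  rw [myc_succ, mul_pow, div_pow, ← mul_div_assoc, ← mul_div_assoc]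
  have hc := myc_pos m
  have hm' : (1:ℝ) ≤ (m:ℝ) := by exact_mod_cast hm
  have h2 : (0:ℝ) < (2*(m:ℝ)+2)^2 := by positivity
  rw [div_le_iff₀ h2]
  have hc2 : (0:ℝ) < myc m ^ 2 := by positivity
  have key : ((m:ℝ)+1+1/4+1/(16*((m:ℝ)+1))) * (2*(m:ℝ)+1)^2
      ≤ ((m:ℝ)+1/4+1/(16*(m:ℝ))) * (2*(m:ℝ)+2)^2 := by
    have hx : (0:ℝ) < (m:ℝ) := by linarith
    have hx1 : (0:ℝ) < (m:ℝ)+1 := by linarith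
    have hu : (1/(16*(m:ℝ))) * (16*(m:ℝ)) = 1 := by field_simp
    have hv : (1/(16*((m:ℝ)+1))) * (16*((m:ℝ)+1)) = 1 := by field_simp
    have hu0 : (0:ℝ) < 1/(16*(m:ℝ)) := by positivity
    have hv0 : (0:ℝ) < 1/(16*((m:ℝ)+1)) := by positivity
    nlinarith [mul_pos hx hx1, mul_pos hu0 hv0, sq_nonneg ((m:ℝ)-1)]
  nlinarith [mul_le_mul_of_nonneg_left key (le_of_lt hc2)]

lemma inv_2m1_tendsto : Tendsto (fun m : ℕ => (2*(m:ℝ)+1)⁻¹) atTop (nhds 0) := by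
  apply Tendsto.inv_tendsto_atTop
  apply tendsto_atTop_add_const_right
  exact (tendsto_natCast_atTop_atTop (R := ℝ)).const_mul_atTop (by norm_num)

lemma c_sq_tendsto : Tendsto (fun m : ℕ => myc m ^ 2) atTop (nhds 0) := by
  have h := wallis_c.mul inv_2m1_tendsto
  simp only [mul_zero] at h
  apply h.congr
  intro m
  have : (2*(m:ℝ)+1) ≠ 0 := by positivity
  field_simp

lemma P_tendsto : Tendsto (fun m : ℕ => ((m:ℝ)+1/4) * myc m ^ 2) atTop (nhds (1/π)) := by
  have h := wallis_c.mul ((tendsto_const_nhds (x := (1/2:ℝ))).sub (inv_2m1_tendsto.const_mul (1/4)))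
  have e : (2/π) * (1/2 - 1/4 * 0) = 1/π := by ring
  rw [e] at h
  apply h.congr
  intro m
  have h0 : (2*(m:ℝ)+1) ≠ 0 := by positivity
  field_simp
  ring

lemma P_le (m : ℕ) : ((m:ℝ)+1/4) * myc m ^ 2 ≤ 1/π := by
  refine Monotone.ge_of_tendsto (f := fun m : ℕ => ((m:ℝ)+1/4) * myc m ^ 2) ?_ P_tendsto m
  apply monotone_nat_of_le_succ
  intro n
  have := P_mono n
  push_cast
  convert this using 2

lemma Q_tendsto : Tendsto (fun m : ℕ => ((m:ℝ)+1/4+1/(16*(m:ℝ))) * myc m ^ 2) atTop (nhds (1/π)) := by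
  have h2 : Tendsto (fun m : ℕ => (1/(16*(m:ℝ))) * myc m ^ 2) atTop (nhds 0) := by
    apply squeeze_zero' (g := fun m : ℕ => myc m ^ 2)
    · filter_upwards [eventually_ge_atTop 1] with m hm
      positivity
    · filter_upwards [eventually_ge_atTop 1] with m hm
      have hm' : (1:ℝ) ≤ (m:ℝ) := by exact_mod_cast hm
      have hc2 : (0:ℝ) ≤ myc m ^ 2 := by positivity
      have : 1/(16*(m:ℝ)) ≤ 1 := by
        rw [div_le_one (by linarith)]; linarith
      nlinarith
    · exact c_sq_tendsto
  have h := P_tendsto.add h2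
  rw [add_zero] at h
  apply h.congr
  intro m
  ring

lemma Q_ge (m : ℕ) (hm : 1 ≤ m) : 1/π ≤ ((m:ℝ)+1/4+1/(16*(m:ℝ))) * myc m ^ 2 := by
  refine le_of_tendsto Q_tendsto ?_
  filter_upwards [eventually_ge_atTop m] with n hn
  induction n, hn using Nat.le_induction with
  | base => exact le_rfl
  | succ n hn ih =>
      refine le_trans ?_ ih
      have := Q_anti n (le_trans hm hn)
      push_cast
      convert this using 2 <;> ring

lemma Gamma_half (m : ℕ) :
    Real.Gamma ((m:ℝ) + 1/2) = Real.sqrt π * ((2*m).factorial : ℝ) / (4^m * (m.factorial : ℝ)) := by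
  induction m with
  | zero =>
      rw [show ((0:ℕ):ℝ) + 1/2 = 1/2 by norm_num, Real.Gamma_one_half_eq]
      norm_num
  | succ n ih =>
      have hne : ((n:ℝ) + 1/2) ≠ 0 := by positivity
      have e : ((n+1:ℕ):ℝ) + 1/2 = ((n:ℝ) + 1/2) + 1 := by push_cast; ring
      rw [e, Real.Gamma_add_one hne, ih]
      have h1 : (2*(n+1)).factorial = (2*n+2) * ((2*n+1) * (2*n).factorial) := by
        have e2 : 2*(n+1) = (2*n+1) + 1 := by ring
        rw [e2, Nat.factorial_succ, Nat.factorial_succ]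
      rw [h1, Nat.factorial_succ]
      have h2 : (0:ℝ) < (n.factorial : ℝ) := by exact_mod_cast n.factorial_pos
      push_cast
      field_simp
      ring

lemma ratio_even (m : ℕ) (hm : 1 ≤ m) :
    (Real.Gamma (((2*m:ℕ):ℝ)/2 + 1/2) / Real.Gamma (((2*m:ℕ):ℝ)/2)) ^ 2 = π * (m:ℝ)^2 * myc m ^ 2 := by
  obtain ⟨k, rfl⟩ : ∃ k, m = k + 1 := ⟨m-1, by omega⟩
  have e1 : ((2*(k+1):ℕ):ℝ)/2 = ((k+1:ℕ):ℝ) := by push_cast; ring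
  rw [e1]
  have e2 : ((k+1:ℕ):ℝ) = (k:ℝ) + 1 := by push_cast; ring
  rw [e2, Real.Gamma_nat_eq_factorial, ← e2, Gamma_half]
  have h2 : (0:ℝ) < (k.factorial : ℝ) := by exact_mod_cast k.factorial_pos
  have h3 : (0:ℝ) < ((2*(k+1)).factorial : ℝ) := by exact_mod_cast (2*(k+1)).factorial_pos
  have hfac : ((k+1).factorial : ℝ) = ((k:ℝ)+1) * (k.factorial : ℝ) := by
    rw [Nat.factorial_succ]; push_cast; ring
  have hsq : Real.sqrt π ^ 2 = π := Real.sq_sqrt pi_pos.le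
  unfold myc
  rw [div_pow, div_pow, mul_pow, mul_pow, hfac, hsq]
  have h4 : (0:ℝ) < ((k:ℝ)+1) := by positivity
  push_cast
  field_simp

lemma ratio_odd (m : ℕ) :
    (Real.Gamma (((2*m+1:ℕ):ℝ)/2 + 1/2) / Real.Gamma (((2*m+1:ℕ):ℝ)/2)) ^ 2
      = 1 / (π * myc m ^ 2) := by
  have e1 : ((2*m+1:ℕ):ℝ)/2 + 1/2 = ((m:ℕ):ℝ) + 1 := by push_cast; ring
  have e2 : ((2*m+1:ℕ):ℝ)/2 = ((m:ℕ):ℝ) + 1/2 := by push_cast; ring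
  rw [e1, e2, Real.Gamma_nat_eq_factorial, Gamma_half]
  have h2 : (0:ℝ) < (m.factorial : ℝ) := by exact_mod_cast m.factorial_pos
  have h3 : (0:ℝ) < ((2*m).factorial : ℝ) := by exact_mod_cast (2*m).factorial_pos
  have hsq : Real.sqrt π ^ 2 = π := Real.sq_sqrt pi_pos.le
  have hs : (0:ℝ) < Real.sqrt π := Real.sqrt_pos.mpr pi_pos
  unfold myc
  rw [div_pow, div_pow, mul_pow, mul_pow, hsq]
  have h4 : (0:ℝ) < (4:ℝ)^m := by positivity
  field_simp

lemma pc_le (m : ℕ) : π * myc m ^ 2 ≤ 1 / ((m:ℝ) + 1/4) := by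
  have h := P_le m
  have hm : (0:ℝ) < (m:ℝ) + 1/4 := by positivity
  rw [le_div_iff₀ hm]
  calc π * myc m ^ 2 * ((m:ℝ)+1/4) = π * (((m:ℝ)+1/4) * myc m ^ 2) := by ring
    _ ≤ π * (1/π) := by exact mul_le_mul_of_nonneg_left h pi_pos.le
    _ = 1 := by field_simp

lemma pc_ge (m : ℕ) (hm : 1 ≤ m) : 1 / ((m:ℝ) + 1/4 + 1/(16*(m:ℝ))) ≤ π * myc m ^ 2 := by
  have h := Q_ge m hm
  have hm' : (1:ℝ) ≤ (m:ℝ) := by exact_mod_cast hm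
  have hd : (0:ℝ) < (m:ℝ) + 1/4 + 1/(16*(m:ℝ)) := by positivity
  rw [div_le_iff₀ hd]
  calc (1:ℝ) = π * (1/π) := by field_simp
    _ ≤ π * (((m:ℝ)+1/4+1/(16*(m:ℝ))) * myc m ^ 2) := mul_le_mul_of_nonneg_left h pi_pos.le
    _ = π * myc m ^ 2 * ((m:ℝ)+1/4+1/(16*(m:ℝ))) := by ring

lemma even_bounds (m : ℕ) (hm : 1 ≤ m) :
    1/2 - 1/((2*m:ℕ):ℝ) ≤ ((2*m:ℕ):ℝ) - 2 * π * (m:ℝ)^2 * myc m ^ 2 ∧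
    ((2*m:ℕ):ℝ) - 2 * π * (m:ℝ)^2 * myc m ^ 2 ≤ 1/2 := by
  have hle := pc_le m
  have hge := pc_ge m hm
  have hm' : (1:ℝ) ≤ (m:ℝ) := by exact_mod_cast hm
  have hm0 : (0:ℝ) < (m:ℝ) := by linarith
  have hA : (0:ℝ) < (m:ℝ) + 1/4 := by linarith
  have hB : (0:ℝ) < (m:ℝ) + 1/4 + 1/(16*(m:ℝ)) := by positivity
  have hu : 1/(16*(m:ℝ)) * (16*(m:ℝ)) = 1 := by field_simp
  have hv : 1/(2*(m:ℝ)) * (2*(m:ℝ)) = 1 := by field_simp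
  have hc2 : (0:ℝ) ≤ myc m ^ 2 := by positivity
  push_cast
  constructor
  · have step2 : 2 * (π * myc m ^ 2) * (m:ℝ)^2 ≤ 2 * (1/((m:ℝ)+1/4)) * (m:ℝ)^2 := by
      gcongr
    have step3 : 2 * (1/((m:ℝ)+1/4)) * (m:ℝ)^2 ≤ 2*(m:ℝ) - 1/2 + 1/(2*(m:ℝ)) := by
      rw [show 2 * (1/((m:ℝ)+1/4)) * (m:ℝ)^2 = 2*(m:ℝ)^2 / ((m:ℝ)+1/4) by ring,
        div_le_iff₀ hA]
      nlinarith
    nlinarith [step2, step3]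
  · have step2 : 2 * ((m:ℝ)^2 / ((m:ℝ)+1/4+1/(16*(m:ℝ)))) ≤ 2 * (π * myc m ^ 2) * (m:ℝ)^2 := by
      rw [show 2 * (π * myc m ^ 2) * (m:ℝ)^2 = 2 * ((m:ℝ)^2 * (π * myc m ^2)) by ring]
      rw [show (m:ℝ)^2 / ((m:ℝ)+1/4+1/(16*(m:ℝ))) = (m:ℝ)^2 * (1/((m:ℝ)+1/4+1/(16*(m:ℝ)))) by ring]
      exact mul_le_mul_of_nonneg_left (mul_le_mul_of_nonneg_left hge (sq_nonneg _)) (by norm_num)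
    have step3 : 2*(m:ℝ) - 1/2 ≤ 2 * ((m:ℝ)^2 / ((m:ℝ)+1/4+1/(16*(m:ℝ)))) := by
      rw [show (2:ℝ) * ((m:ℝ)^2 / ((m:ℝ)+1/4+1/(16*(m:ℝ)))) = 2*(m:ℝ)^2 / ((m:ℝ)+1/4+1/(16*(m:ℝ))) by ring,
        le_div_iff₀ hB]
      nlinarith [mul_pos hm0 hm0]
    nlinarith [step2, step3]

lemma odd_bounds (m : ℕ) (hm : 1 ≤ m) :
    1/2 - 1/((2*m+1:ℕ):ℝ) ≤ ((2*m+1:ℕ):ℝ) - 2 * (1 / (π * myc m ^ 2)) ∧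
    ((2*m+1:ℕ):ℝ) - 2 * (1 / (π * myc m ^ 2)) ≤ 1/2 := by
  have hle := pc_le m
  have hge := pc_ge m hm
  have hm' : (1:ℝ) ≤ (m:ℝ) := by exact_mod_cast hm
  have hm0 : (0:ℝ) < (m:ℝ) := by linarith
  have hA : (0:ℝ) < (m:ℝ) + 1/4 := by linarith
  have hB : (0:ℝ) < (m:ℝ) + 1/4 + 1/(16*(m:ℝ)) := by positivity
  have ht : (0:ℝ) < π * myc m ^ 2 := by
    have := myc_pos m
    positivity
  rw [le_div_iff₀ hA] at hle
  rw [div_le_iff₀ hB] at hge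
  push_cast
  constructor
  · -- F ≥ 2m+1 - 2*(m+1/4+1/(16m)) = 1/2 - 1/(8m) ≥ 1/2 - 1/(2m+1)
    have h1 : 2 / (π * myc m ^ 2) ≤ 2 * ((m:ℝ) + 1/4 + 1/(16*(m:ℝ))) := by
      rw [div_le_iff₀ ht]
      nlinarith
    have h2 : 2 * (1/(16*(m:ℝ))) ≤ 1/(2*(m:ℝ)+1) := by
      rw [show 2 * (1/(16*(m:ℝ))) = 1/(8*(m:ℝ)) by
        rw [mul_one_div, div_eq_div_iff (by positivity) (by positivity)]; ring]
      apply div_le_div_of_nonneg_left (by norm_num) (by linarith) (by linarith)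
    have h3 : 2 * (1 / (π * myc m ^ 2)) = 2 / (π * myc m ^ 2) := by ring
    rw [h3]
    linarith
  · -- 2/t ≥ 2(m+1/4)
    have h1 : 2 * ((m:ℝ) + 1/4) ≤ 2 / (π * myc m ^ 2) := by
      rw [le_div_iff₀ ht]
      nlinarith
    have h3 : 2 * (1 / (π * myc m ^ 2)) = 2 / (π * myc m ^ 2) := by ring
    rw [h3]
    linarith

theorem stmt13 :
    Tendsto (fun d : ℕ =>
        (d : ℝ) - 2 * (Real.Gamma (((d : ℝ) + 1) / 2) / Real.Gamma ((d : ℝ) / 2)) ^ 2)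
      atTop (nhds (1 / 2)) := by
  set F : ℕ → ℝ := fun d : ℕ =>
      (d : ℝ) - 2 * (Real.Gamma (((d : ℝ) + 1) / 2) / Real.Gamma ((d : ℝ) / 2)) ^ 2 with hF
  have key : ∀ d : ℕ, 2 ≤ d → 1/2 - 1/(d:ℝ) ≤ F d ∧ F d ≤ 1/2 := by
    intro d hd
    rcases Nat.even_or_odd d with ⟨m, rfl⟩ | ⟨m, rfl⟩
    · have hm : 1 ≤ m := by omega
      have e2 : m + m = 2*m := by ring
      rw [hF]
      simp only [e2]
      rw [show (((2*m:ℕ):ℝ)+1)/2 = ((2*m:ℕ):ℝ)/2 + 1/2 by ring, ratio_even m hm]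
      have h := even_bounds m hm
      constructor
      · calc 1/2 - 1/((2*m:ℕ):ℝ) ≤ ((2*m:ℕ):ℝ) - 2 * π * (m:ℝ)^2 * myc m ^ 2 := h.1
          _ = ((2*m:ℕ):ℝ) - 2 * (π * (m:ℝ)^2 * myc m ^ 2) := by ring
      · calc ((2*m:ℕ):ℝ) - 2 * (π * (m:ℝ)^2 * myc m ^ 2)
            = ((2*m:ℕ):ℝ) - 2 * π * (m:ℝ)^2 * myc m ^ 2 := by ring
          _ ≤ 1/2 := h.2
    · have hm : 1 ≤ m := by omega
      rw [hF]
      simp only []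
      rw [show (((2*m+1:ℕ):ℝ)+1)/2 = ((2*m+1:ℕ):ℝ)/2 + 1/2 by ring, ratio_odd m]
      exact odd_bounds m hm
  have glim : Tendsto (fun d : ℕ => (1:ℝ)/2 - 1/(d:ℝ)) atTop (nhds (1/2)) := by
    have := tendsto_const_nhds (x := (1:ℝ)/2) (f := atTop (α := ℕ))
    have h2 := this.sub tendsto_one_div_atTop_nhds_zero_nat
    rwa [sub_zero] at h2
  refine tendsto_of_tendsto_of_tendsto_of_le_of_le' glim tendsto_const_nhds ?_ ?_
  · filter_upwards [eventually_ge_atTop 2] with d hd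
    exact (key d hd).1
  · filter_upwards [eventually_ge_atTop 2] with d hd
    exact (key d hd).2
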